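/- arXiv:1908.09094 — 4 statements merged into one kernel-verified Lean document; each statement's English description precedes it below -/
import Mathlib

section
/- Let η be a Borel probability measure on ℝ with finite mean m(η) whose support is unbounded on the positive real line, i.e. η((y,∞)) > 0 for every y ∈ ℝ. Then for every finite a > 0 and every b > m(η) there exists a Borel probability measure κ on ℝ with finite mean such that KL(η,κ) ≤ a and m(κ) ≥ b. -/
open MeasureTheory Filter Set
open scoped ENNReal NNReal Classical

/-- Kullback–Leibler divergence between two measures on ℝ, valued in `ℝ≥0∞`
(`∞` if `η` is not absolutely continuous w.r.t. `κ` or the log-likelihood ratio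
is not integrable under `η`). -/
noncomputable def KL (η κ : Measure ℝ) : ℝ≥0∞ :=
  if η ≪ κ ∧ Integrable (llr η κ) η then ENNReal.ofReal (∫ y, llr η κ y ∂η) else ⊤

/-- The mean of a measure on ℝ. -/
noncomputable def meanM (η : Measure ℝ) : ℝ := ∫ y, y ∂η

/-- If a Borel probability measure `η` on ℝ has finite mean and its
support is unbounded on the positive real line, then for every `a > 0` and every
`b > m(η)` there is a Borel probability measure `κ` on ℝ with finite mean such that
`KL(η, κ) ≤ a` and `m(κ) ≥ b`. -/
theorem stmt_0 (η : Measure ℝ) (hη : IsProbabilityMeasure η)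
    (hmean : Integrable (fun y : ℝ => y) η)
    (hsupp : ∀ y : ℝ, 0 < η (Set.Ioi y))
    (a b : ℝ) (ha : 0 < a) (hb : meanM η < b) :
    ∃ κ : Measure ℝ, IsProbabilityMeasure κ ∧ Integrable (fun y : ℝ => y) κ ∧
      KL η κ ≤ ENNReal.ofReal a ∧ b ≤ meanM κ := by
  set c : ℝ := Real.exp (-a) with hc
  have hc0 : 0 < c := Real.exp_pos _
  have hc1 : c < 1 := by
    rw [hc, ← Real.exp_zero]
    exact Real.exp_lt_exp.mpr (by linarith)
  set m : ℝ := meanM η with hm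
  set B : ℝ := (b - c * m) / (1 - c) with hB
  -- choose a non-atom M > B
  obtain ⟨M, hMB, hM0⟩ : ∃ M : ℝ, B < M ∧ η {M} = 0 := by
    have hcnt : Set.Countable {t : ℝ | 0 < η {t}} := by
      have := Measure.countable_meas_level_set_pos (μ := η) (g := (id : ℝ → ℝ))
        measurable_id
      simpa using this
    have hd : Dense ({t : ℝ | 0 < η {t}}ᶜ) := hcnt.dense_compl ℝ
    obtain ⟨M, hM1, hM2⟩ := hd.exists_mem_open isOpen_Ioi (nonempty_Ioi (a := B))
    refine ⟨M, hM2, ?_⟩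
    simpa [pos_iff_ne_zero] using hM1
  set κ : Measure ℝ :=
    (ENNReal.ofReal c) • η + (ENNReal.ofReal (1 - c)) • Measure.dirac M with hκ
  have hκprob : IsProbabilityMeasure κ := by
    constructor
    simp only [hκ, Measure.add_apply, Measure.smul_apply, measure_univ, smul_eq_mul, mul_one]
    rw [← ENNReal.ofReal_add hc0.le (by linarith : (0:ℝ) ≤ 1 - c)]
    norm_num
  have hdint : Integrable (fun y : ℝ => y) (Measure.dirac M) := by
    have hae : (fun y : ℝ => y) =ᵐ[Measure.dirac M] fun _ => M := by
      rw [ae_dirac_eq]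
      exact Filter.eventually_pure.mpr rfl
    exact (integrable_const M).congr hae.symm
  have hκint : Integrable (fun y : ℝ => y) κ := by
    refine Integrable.add_measure ?_ ?_
    · exact hmean.smul_measure ENNReal.ofReal_ne_top
    · exact hdint.smul_measure ENNReal.ofReal_ne_top
  have hle : (ENNReal.ofReal c) • η ≤ κ := Measure.le_add_right le_rfl
  have hac : η ≪ κ := by
    refine Measure.AbsolutelyContinuous.trans ?_ (Measure.absolutelyContinuous_of_le hle)
    intro s hs
    have : (ENNReal.ofReal c) * η s = 0 := hs
    simpa [mul_eq_zero, ENNReal.ofReal_eq_zero, not_le.mpr hc0] using this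
  set g : ℝ → ℝ≥0∞ := ({M}ᶜ : Set ℝ).indicator (fun _ => ENNReal.ofReal (Real.exp a))
    with hg
  have hg_meas : Measurable g :=
    measurable_const.indicator (measurableSet_singleton M).compl
  have hwd : κ.withDensity g = η := by
    ext A hA
    rw [withDensity_apply _ hA]
    rw [show (∫⁻ x in A, g x ∂κ) = ∫⁻ x, g x ∂(κ.restrict A) from rfl]
    rw [hg, lintegral_indicator (measurableSet_singleton M).compl _,
      Measure.restrict_restrict (measurableSet_singleton M).compl, lintegral_const,
      Measure.restrict_apply MeasurableSet.univ, Set.univ_inter]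
    have hd : Measure.dirac M ({M}ᶜ ∩ A) = 0 := by
      rw [Measure.dirac_apply' _ (((measurableSet_singleton M).compl).inter hA)]
      simp
    have hηA : η ({M}ᶜ ∩ A) = η A := by
      rw [Set.inter_comm, ← Set.diff_eq]
      exact measure_diff_null hM0
    rw [hκ]
    simp only [Measure.add_apply, Measure.smul_apply, smul_eq_mul, hd, hηA, mul_zero, add_zero]
    rw [← mul_assoc, ← ENNReal.ofReal_mul (Real.exp_pos a).le, hc, ← Real.exp_add]
    simp
  have hrnκ : η.rnDeriv κ =ᵐ[κ] g := by
    rw [← hwd]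
    exact Measure.rnDeriv_withDensity κ hg_meas
  have hrnη : η.rnDeriv κ =ᵐ[η] g := hrnκ.filter_mono hac.ae_le
  have hxM : ∀ᵐ x ∂η, x ≠ M := by
    rw [ae_iff]
    simpa using hM0
  have hllr : llr η κ =ᵐ[η] fun _ => a := by
    filter_upwards [hrnη, hxM] with x hx hxne
    rw [llr_def]
    simp only [hx, hg, Set.indicator_of_mem (show x ∈ ({M}ᶜ : Set ℝ) from hxne),
      ENNReal.toReal_ofReal (Real.exp_pos a).le, Real.log_exp]
  have hint : Integrable (llr η κ) η := (integrable_const a).congr hllr.symm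
  have hKL : KL η κ = ENNReal.ofReal a := by
    rw [KL, if_pos ⟨hac, hint⟩, integral_congr_ae hllr]
    simp
  refine ⟨κ, hκprob, hκint, hKL.le, ?_⟩
  have hmκ : meanM κ = c * m + (1 - c) * M := by
    rw [meanM, hκ, integral_add_measure (hmean.smul_measure ENNReal.ofReal_ne_top)
      (hdint.smul_measure ENNReal.ofReal_ne_top),
      integral_smul_measure, integral_smul_measure, integral_dirac,
      ENNReal.toReal_ofReal hc0.le, ENNReal.toReal_ofReal (by linarith : (0:ℝ) ≤ 1 - c)]
    rw [hm, meanM]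
    simp only [smul_eq_mul]
    try ring
  rw [hmκ]
  have h1c : 0 < 1 - c := by linarith
  have := (div_lt_iff₀ h1c).mp hMB
  nlinarith
end

section
/- Let 𝒰 be a KL right dense collection of Borel probability measures on ℝ with finite means, let K ≥ 2, and let μ = (μ_1,…,μ_K) ∈ 𝒰^K with m(μ_1) > max_{i≠1} m(μ_i). Suppose e_1,…,e_K ∈ [0,∞] and c > 0 satisfy: for every ν = (ν_1,…,ν_K) ∈ 𝒰^K with m(ν_1) ≤ max_{i≠1} m(ν_i), one has Σ_{i=1}^K e_i·KL(μ_i,ν_i) ≥ c. Then e_k = ∞ for every k with 2 ≤ k ≤ K. -/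
open MeasureTheory Filter Set
open scoped ENNReal NNReal Classical

lemma KL_self (η : Measure ℝ) [IsProbabilityMeasure η] : KL η η = 0 := by
  have h0 : llr η η =ᵐ[η] fun _ => (0 : ℝ) := by
    filter_upwards [Measure.rnDeriv_self η] with x hx
    simp [llr, hx]
  have hint : Integrable (llr η η) η :=
    (integrable_congr h0).mpr (integrable_const 0)
  have : (∫ y, llr η η y ∂η) = 0 := by
    rw [integral_congr_ae h0]; simp
  simp [KL, Measure.AbsolutelyContinuous.rfl, hint, this]

/-- Let `U` be a KL right dense collection of Borel probability
measures on ℝ with finite means, `K ≥ 2`, and `μ ∈ U^K` with arm `0` having the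
strictly largest mean.  If the weights `e : Fin K → ℝ≥0∞` and `c > 0` satisfy the
transportation inequality `∑ i, e i * KL (μ i) (ν i) ≥ c` for every alternative
`ν ∈ U^K` (i.e. `m(ν 0) ≤ max_{i ≠ 0} m(ν i)`), then `e k = ∞` for every `k ≠ 0`. -/
theorem stmt_1 (U : Set (Measure ℝ))
    (hU : ∀ η ∈ U, IsProbabilityMeasure η ∧ Integrable (fun y : ℝ => y) η)
    (hdense : ∀ η ∈ U, ∀ a : ℝ, 0 < a → ∀ b : ℝ, meanM η < b →
      ∃ κ ∈ U, KL η κ ≤ ENNReal.ofReal a ∧ b ≤ meanM κ)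
    (K : ℕ) (hK : 2 ≤ K) (μ : Fin K → Measure ℝ) (hμ : ∀ i, μ i ∈ U)
    (hbest : ∀ i : Fin K, i ≠ ⟨0, by omega⟩ → meanM (μ i) < meanM (μ ⟨0, by omega⟩))
    (e : Fin K → ℝ≥0∞) (c : ℝ) (hc : 0 < c)
    (hineq : ∀ ν : Fin K → Measure ℝ, (∀ i, ν i ∈ U) →
      (∃ i : Fin K, i ≠ ⟨0, by omega⟩ ∧ meanM (ν ⟨0, by omega⟩) ≤ meanM (ν i)) →
      ENNReal.ofReal c ≤ ∑ i, e i * KL (μ i) (ν i)) :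
    ∀ k : Fin K, k ≠ ⟨0, by omega⟩ → e k = ⊤ := by
  intro k hk
  by_contra hek
  -- choose a small a with e k * ofReal a < ofReal c
  set E : ℝ := (e k).toReal + 1 with hE
  have hEpos : 0 < E := by positivity
  have ha : 0 < c / E := div_pos hc hEpos
  obtain ⟨κ, hκU, hκKL, hκm⟩ := hdense (μ k) (hμ k) (c / E) ha
    (meanM (μ ⟨0, by omega⟩)) (hbest k hk)
  set ν : Fin K → Measure ℝ := fun i => if i = k then κ else μ i with hν
  have hνU : ∀ i, ν i ∈ U := by
    intro i; by_cases h : i = k <;> simp [hν, h, hκU, hμ i]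
  have halt : ∃ i : Fin K, i ≠ ⟨0, by omega⟩ ∧ meanM (ν ⟨0, by omega⟩) ≤ meanM (ν i) := by
    refine ⟨k, hk, ?_⟩
    have h0 : (⟨0, by omega⟩ : Fin K) ≠ k := fun h => hk h.symm
    simp [hν, h0, hκm]
  have hsum := hineq ν hνU halt
  have hsum_eq : (∑ i, e i * KL (μ i) (ν i)) = e k * KL (μ k) κ := by
    rw [Finset.sum_eq_single k]
    · simp [hν]
    · intro i _ hik
      haveI := (hU (μ i) (hμ i)).1
      simp [hν, hik, KL_self]
    · simp
  rw [hsum_eq] at hsum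
  have hlt : e k * KL (μ k) κ < ENNReal.ofReal c := by
    set T : ℝ := (e k).toReal with hT
    have hTE : T < E := by simp [hE, hT]
    calc e k * KL (μ k) κ ≤ e k * ENNReal.ofReal (c / E) :=
          mul_le_mul_right hκKL _
      _ ≤ ENNReal.ofReal T * ENNReal.ofReal (c / E) := by
          gcongr
          exact (ENNReal.le_ofReal_iff_toReal_le hek (ENNReal.toReal_nonneg)).mpr le_rfl
      _ = ENNReal.ofReal (T * (c / E)) := (ENNReal.ofReal_mul ENNReal.toReal_nonneg).symm
      _ < ENNReal.ofReal c := by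
          rw [ENNReal.ofReal_lt_ofReal_iff hc]
          calc T * (c / E) < E * (c / E) := by
                exact mul_lt_mul_of_pos_right hTE ha
            _ = c := mul_div_cancel₀ _ hEpos.ne'
  exact absurd hsum (not_le.mpr hlt)
end

section
/- Let η be a Borel probability measure on ℝ with finite mean m(η) and with E_{X∼η}[f(|X|)] < ∞, and let x ∈ ℝ satisfy f(|x|) < B. Then KL_inf(η,x) < ∞. -/
open MeasureTheory Filter Set
open scoped ENNReal NNReal Classical

/-- Membership in the class `ℒ`: Borel probability measures on ℝ with `E[f(|X|)] ≤ B`. -/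
def inL (f : ℝ → ℝ) (B : ℝ) (κ : Measure ℝ) : Prop :=
  IsProbabilityMeasure κ ∧ (∫⁻ y, ENNReal.ofReal (f |y|) ∂κ) ≤ ENNReal.ofReal B

/-- `KL_inf(η, x)`: the infimum of `KL(η, κ)` over `κ ∈ ℒ` with `m(κ) ≥ x` when
`x ≥ m(η)`, and over `κ ∈ ℒ` with `m(κ) ≤ x` when `x < m(η)`. -/
noncomputable def KLinf (f : ℝ → ℝ) (B : ℝ) (η : Measure ℝ) (x : ℝ) : ℝ≥0∞ :=
  if meanM η ≤ x then
    ⨅ κ ∈ {κ : Measure ℝ | inL f B κ ∧ x ≤ meanM κ}, KL η κ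
  else
    ⨅ κ ∈ {κ : Measure ℝ | inL f B κ ∧ meanM κ ≤ x}, KL η κ

open Topology

/-! Choose `t > |x|` so close to `|x|` that `f t < B`, and avoiding the countably many atoms of
`η` and their negatives; let `z = t` if `m(η) ≤ x` and `z = -t` otherwise. The mixtures
`κₐ = a • η + (1 - a) • δ_z` have mean tending to `z` and `f`-moment tending to `f t < B` as
`a → 0⁺`, so some `κₐ` is admissible. Since `η {z} = 0`, the density `dη/dκₐ` is `η`-a.e. the
constant `a⁻¹`, hence `KL(η, κₐ) = log a⁻¹ < ∞`. -/

noncomputable def mixDirac {α : Type*} [MeasurableSpace α] (η : Measure α) (z : α) (a : ℝ) :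
    Measure α :=
  ENNReal.ofReal a • η + ENNReal.ofReal (1 - a) • Measure.dirac z

section mixDirac

variable {α : Type*} [MeasurableSpace α] (η : Measure α) (z : α) {a : ℝ}

lemma isProbabilityMeasure_mixDirac [IsProbabilityMeasure η] (ha : 0 ≤ a) (ha1 : a ≤ 1) :
    IsProbabilityMeasure (mixDirac η z a) := by
  constructor
  simp only [mixDirac, Measure.add_apply, Measure.smul_apply, smul_eq_mul, measure_univ, mul_one]
  rw [← ENNReal.ofReal_add ha (by linarith)]
  norm_num

instance [IsFiniteMeasure η] : IsFiniteMeasure (mixDirac η z a) := by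
  constructor
  simp [mixDirac, ENNReal.mul_lt_top]

variable [MeasurableSingletonClass α]

lemma lintegral_mixDirac (a : ℝ) (g : α → ℝ≥0∞) :
    ∫⁻ y, g y ∂(mixDirac η z a) =
      ENNReal.ofReal a * ∫⁻ y, g y ∂η + ENNReal.ofReal (1 - a) * g z := by
  simp [mixDirac, lintegral_add_measure, lintegral_smul_measure, lintegral_dirac]

lemma withDensity_mixDirac (hz : η {z} = 0) (ha : 0 < a) :
    (mixDirac η z a).withDensity (({z}ᶜ : Set α).indicator fun _ ↦ ENNReal.ofReal a⁻¹) = η := by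
  have hne : ∀ᵐ y ∂η, y ≠ z := measure_eq_zero_iff_ae_notMem.mp hz
  ext S hS
  rw [withDensity_apply _ hS, mixDirac, Measure.restrict_add, Measure.restrict_smul,
    Measure.restrict_smul, lintegral_add_measure, lintegral_smul_measure, lintegral_smul_measure,
    setLIntegral_dirac, indicator_of_notMem (notMem_compl_iff.mpr (mem_singleton z)), ite_self,
    smul_zero, add_zero, setLIntegral_congr_fun_ae hS (hne.mono fun y hy _ ↦ indicator_of_mem hy _),
    setLIntegral_const, smul_eq_mul, ← mul_assoc, ← ENNReal.ofReal_mul ha.le,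
    mul_inv_cancel₀ ha.ne', ENNReal.ofReal_one, one_mul]

lemma absolutelyContinuous_mixDirac (hz : η {z} = 0) (ha : 0 < a) :
    η ≪ mixDirac η z a := by
  have hac := withDensity_absolutelyContinuous (mixDirac η z a)
    (({z}ᶜ : Set α).indicator fun _ ↦ ENNReal.ofReal a⁻¹)
  rwa [withDensity_mixDirac η z hz ha] at hac

lemma llr_mixDirac_ae_eq [IsFiniteMeasure η] (hz : η {z} = 0) (ha : 0 < a) :
    llr η (mixDirac η z a) =ᵐ[η] fun _ ↦ Real.log a⁻¹ := by
  have hrn := Measure.rnDeriv_withDensity (mixDirac η z a)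
    ((measurable_const (a := ENNReal.ofReal a⁻¹)).indicator (measurableSet_singleton z).compl)
  rw [withDensity_mixDirac η z hz ha] at hrn
  filter_upwards [(absolutelyContinuous_mixDirac η z hz ha).ae_eq hrn,
    measure_eq_zero_iff_ae_notMem.mp hz] with y hy hyz
  rw [llr, hy, indicator_of_mem hyz, ENNReal.toReal_ofReal (inv_nonneg.mpr ha.le)]

end mixDirac

lemma KL_mixDirac_lt_top (η : Measure ℝ) [IsFiniteMeasure η] {z a : ℝ} (hz : η {z} = 0)
    (ha : 0 < a) : KL η (mixDirac η z a) < ⊤ := by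
  have hint : Integrable (llr η (mixDirac η z a)) η :=
    (integrable_const _).congr (llr_mixDirac_ae_eq η z hz ha).symm
  rw [KL, if_pos ⟨absolutelyContinuous_mixDirac η z hz ha, hint⟩]
  exact ENNReal.ofReal_lt_top

lemma meanM_mixDirac {η : Measure ℝ} (hη : Integrable (fun y ↦ y) η) (z : ℝ) {a : ℝ}
    (ha : 0 ≤ a) (ha1 : a ≤ 1) : meanM (mixDirac η z a) = a * meanM η + (1 - a) * z := by
  have hdirac : Integrable (fun y ↦ y) (Measure.dirac z) := integrable_dirac (by simp)
  rw [meanM, mixDirac, integral_add_measure (hη.smul_measure ENNReal.ofReal_ne_top)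
    (hdirac.smul_measure ENNReal.ofReal_ne_top), integral_smul_measure, integral_smul_measure,
    integral_dirac, ENNReal.toReal_ofReal ha, ENNReal.toReal_ofReal (by linarith)]
  rfl

lemma tendsto_meanM_mixDirac {η : Measure ℝ} (hη : Integrable (fun y ↦ y) η) (z : ℝ) :
    Tendsto (fun a ↦ meanM (mixDirac η z a)) (𝓝[>] 0) (𝓝 z) := by
  have hlim : Tendsto (fun a : ℝ ↦ a * meanM η + (1 - a) * z) (𝓝[>] 0) (𝓝 z) :=
    tendsto_nhdsWithin_of_tendsto_nhds <| Continuous.tendsto' (by fun_prop) 0 z (by simp)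
  refine hlim.congr' ?_
  filter_upwards [Ioo_mem_nhdsGT one_pos] with a ha
  exact (meanM_mixDirac hη z ha.1.le ha.2.le).symm

lemma eventually_inL_mixDirac {f : ℝ → ℝ} {B : ℝ} (η : Measure ℝ) [IsProbabilityMeasure η]
    (hfint : ∫⁻ y, ENNReal.ofReal (f |y|) ∂η < ⊤) {z : ℝ} (hfz0 : 0 ≤ f |z|)
    (hfz : f |z| < B) :
    ∀ᶠ a in 𝓝[>] 0, inL f B (mixDirac η z a) := by
  set C := (∫⁻ y, ENNReal.ofReal (f |y|) ∂η).toReal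
  have hlim : Tendsto (fun a : ℝ ↦ a * C + (1 - a) * f |z|) (𝓝[>] 0) (𝓝 (f |z|)) :=
    tendsto_nhdsWithin_of_tendsto_nhds <| Continuous.tendsto' (by fun_prop) 0 _ (by simp)
  filter_upwards [hlim.eventually_lt_const hfz, Ioo_mem_nhdsGT one_pos] with a hmoment ha
  refine ⟨isProbabilityMeasure_mixDirac η z ha.1.le ha.2.le, ?_⟩
  rw [lintegral_mixDirac, ← ENNReal.ofReal_toReal hfint.ne, ← ENNReal.ofReal_mul ha.1.le,
    ← ENNReal.ofReal_mul (sub_nonneg.mpr ha.2.le),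
    ← ENNReal.ofReal_add (mul_nonneg ha.1.le ENNReal.toReal_nonneg)
      (mul_nonneg (sub_nonneg.mpr ha.2.le) hfz0)]
  exact ENNReal.ofReal_le_ofReal hmoment.le

lemma exists_mem_Ioo_measure_singleton_eq_zero (μ : Measure ℝ) [SFinite μ] {a b : ℝ}
    (hab : a < b) : ∃ t ∈ Ioo a b, μ {t} = 0 ∧ μ {-t} = 0 := by
  have hatoms : {s : ℝ | 0 < μ {s}}.Countable :=
    Measure.countable_meas_pos_of_disjoint_iUnion (fun _ ↦ measurableSet_singleton _)
      (fun _ _ hst ↦ disjoint_singleton.mpr hst)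
  obtain ⟨t, ht, htab⟩ := ((hatoms.union (hatoms.preimage neg_injective)).dense_compl ℝ
    ).exists_mem_open isOpen_Ioo (nonempty_Ioo.mpr hab)
  simp only [mem_compl_iff, mem_union, mem_ofPred_eq, mem_preimage, not_or, not_lt,
    nonpos_iff_eq_zero] at ht
  exact ⟨t, htab, ht⟩

theorem stmt_4_general (f : ℝ → ℝ) (B : ℝ)
    (hf_cont : ContinuousOn f (Set.Ici 0))
    (hf_nonneg : ∀ y : ℝ, 0 ≤ y → 0 ≤ f y)
    (η : Measure ℝ) (hη : IsProbabilityMeasure η)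
    (hmean : Integrable (fun y : ℝ => y) η)
    (hfint : (∫⁻ y, ENNReal.ofReal (f |y|) ∂η) < ⊤)
    (x : ℝ) (hx : f |x| < B) :
    KLinf f B η x < ⊤ := by
  have hfB : ∀ᶠ t in 𝓝[>] |x|, f t < B := Tendsto.eventually_lt_const hx
    ((hf_cont |x| (abs_nonneg x)).mono (Ioi_subset_Ici (abs_nonneg x)))
  obtain ⟨b, hxb, hb⟩ := mem_nhdsGT_iff_exists_Ioo_subset.mp hfB
  obtain ⟨t, ht, hηt, hηnt⟩ := exists_mem_Ioo_measure_singleton_eq_zero η hxb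
  have ht0 : 0 < t := (abs_nonneg x).trans_lt ht.1
  have hadmissible : ∀ z, |z| = t → η {z} = 0 →
      ∀ᶠ a in 𝓝[>] 0, inL f B (mixDirac η z a) ∧ KL η (mixDirac η z a) < ⊤ :=
    fun z hz hηz ↦ (eventually_inL_mixDirac η hfint (hz ▸ hf_nonneg t ht0.le) (hz ▸ hb ht)).and
      (eventually_mem_nhdsWithin.mono fun _ ha ↦ KL_mixDirac_lt_top η hηz ha)
  unfold KLinf
  split_ifs
  · obtain ⟨a, ⟨hL, hKL⟩, hm⟩ := ((hadmissible t (abs_of_pos ht0) hηt).and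
      ((tendsto_meanM_mixDirac hmean t).eventually_const_le
        ((le_abs_self x).trans_lt ht.1))).exists
    exact (iInf₂_le _ ⟨hL, hm⟩).trans_lt hKL
  · have habs : |-t| = t := by rw [abs_neg, abs_of_pos ht0]
    obtain ⟨a, ⟨hL, hKL⟩, hm⟩ := ((hadmissible (-t) habs hηnt).and
      ((tendsto_meanM_mixDirac hmean (-t)).eventually_le_const
        (neg_lt.mp ((neg_le_abs x).trans_lt ht.1)))).exists
    exact (iInf₂_le _ ⟨hL, hm⟩).trans_lt hKL

/-- If `η` is a Borel probability measure on ℝ with finite mean and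
`E_η[f(|X|)] < ∞`, and `x` satisfies `f(|x|) < B`, then `KL_inf(η, x) < ∞`. -/
theorem stmt_4 (f : ℝ → ℝ) (B : ℝ)
    (hf_mono : StrictMonoOn f (Set.Ici 0))
    (hf_cont : ContinuousOn f (Set.Ici 0))
    (hf_nonneg : ∀ y : ℝ, 0 ≤ y → 0 ≤ f y)
    (hf_conv : StrictConvexOn ℝ (Set.Ici 0) f)
    (hf_growth : Tendsto (fun y : ℝ => f y / y) atTop atTop)
    (hB : 0 < B) (hf0B : f 0 < B)
    (η : Measure ℝ) (hη : IsProbabilityMeasure η)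
    (hmean : Integrable (fun y : ℝ => y) η)
    (hfint : (∫⁻ y, ENNReal.ofReal (f |y|) ∂η) < ⊤)
    (x : ℝ) (hx : f |x| < B) :
    KLinf f B η x < ⊤ :=
  stmt_4_general f B hf_cont hf_nonneg η hη hmean hfint x hx
end

section
/- Let κ ∈ ℒ with finite mean m(κ), let λ₁ > 0 and λ₂ > 0 satisfy 1 − (y − m(κ))λ₁ − (B − f(|y|))λ₂ ≥ 0 for all y ∈ ℝ, and let X₁,…,X_n be i.i.d. random variables with law κ. Then for every u ≥ 0, P( (1/n) Σ_{i=1}^n log( 1 − (X_i − m(κ))λ₁ − (B − f(|X_i|))λ₂ ) ≥ u ) ≤ e^{−nu}. -/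
open MeasureTheory Filter Set
open scoped ENNReal NNReal Classical

/-- Extended-real logarithm of a real number: `log r` for `r > 0` and `−∞` for `r ≤ 0`. -/
noncomputable def elog (r : ℝ) : EReal := ENNReal.log (ENNReal.ofReal r)

/-! With `G(y) = 1 − (y − m(κ))λ₁ − (B − f(|y|))λ₂ ≥ 0`, the mean of `G` under `κ` is
`1 − (B − E_κ[f(|X|)])λ₂ ≤ 1`, so by independence `E[∏ᵢ G(Xᵢ)] ≤ 1`. The event in question is
`{∏ᵢ G(Xᵢ) ≥ e^{nu}}`, and Markov's inequality bounds its probability by `e^{−nu}`. -/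

open ProbabilityTheory

theorem ENNReal.log_prod {ι : Type*} (s : Finset ι) (x : ι → ℝ≥0∞) :
    ENNReal.log (∏ i ∈ s, x i) = ∑ i ∈ s, ENNReal.log (x i) := by
  induction s using Finset.cons_induction with
  | empty => simp
  | cons j s hj ih => rw [Finset.prod_cons, Finset.sum_cons, ENNReal.log_mul_add, ih]

/- Since `elog = ENNReal.log ∘ ENNReal.ofReal` and `ENNReal.log` is multiplicative, a
nonpositive `a i` (where `elog (a i) = ⊥`) needs no separate treatment. -/
theorem ofReal_exp_le_prod_of_le_inv_mul_sum_elog {ι : Type*} {s : Finset ι} {a : ι → ℝ}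
    {c u : ℝ} (hc : 0 < c) (h : (u : EReal) ≤ (c⁻¹ : ℝ) * ∑ i ∈ s, elog (a i)) :
    ENNReal.ofReal (Real.exp (c * u)) ≤ ∏ i ∈ s, ENNReal.ofReal (a i) := by
  rw [← ENNReal.log_le_log_iff, ENNReal.log_ofReal_of_pos (Real.exp_pos _), Real.log_exp,
    ENNReal.log_prod]
  calc ((c * u : ℝ) : EReal) ≤ (c : EReal) * ((c⁻¹ : ℝ) * ∑ i ∈ s, elog (a i)) := by
        rw [EReal.coe_mul]
        exact mul_le_mul_of_nonneg_left h (EReal.coe_nonneg.mpr hc.le)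
    _ = ∑ i ∈ s, elog (a i) := by
        rw [← mul_assoc, ← EReal.coe_mul, mul_inv_cancel₀ hc.ne', EReal.coe_one, one_mul]
    _ = ∑ i ∈ s, ENNReal.log (ENNReal.ofReal (a i)) := rfl

theorem measure_exp_le_le_exp_neg_of_lintegral_le_one {Ω : Type*} [MeasurableSpace Ω]
    {P : Measure Ω} {Z : Ω → ℝ≥0∞} (hZ : AEMeasurable Z P) (hZ₁ : ∫⁻ ω, Z ω ∂P ≤ 1) (t : ℝ) :
    P {ω | ENNReal.ofReal (Real.exp t) ≤ Z ω} ≤ ENNReal.ofReal (Real.exp (-t)) :=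
  calc P {ω | ENNReal.ofReal (Real.exp t) ≤ Z ω}
      ≤ (∫⁻ ω, Z ω ∂P) / ENNReal.ofReal (Real.exp t) :=
        meas_ge_le_lintegral_div hZ (by simp [Real.exp_pos]) ENNReal.ofReal_ne_top
    _ ≤ 1 / ENNReal.ofReal (Real.exp t) := by gcongr
    _ = ENNReal.ofReal (Real.exp (-t)) := by
        rw [Real.exp_neg, ENNReal.ofReal_inv_of_pos (Real.exp_pos _), one_div]

theorem lintegral_prod_le_one_of_iIndepFun {Ω ι : Type*} [MeasurableSpace Ω] {P : Measure Ω}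
    {Y : ι → Ω → ℝ≥0∞} (hY : iIndepFun Y P) (hY_meas : ∀ i, Measurable (Y i))
    (hY₁ : ∀ i, ∫⁻ ω, Y i ω ∂P ≤ 1) (s : Finset ι) :
    ∫⁻ ω, ∏ i ∈ s, Y i ω ∂P ≤ 1 := by
  rw [lintegral_prod_eq_prod_lintegral_of_indepFun s Y hY hY_meas]
  exact Finset.prod_le_one' fun i _ => hY₁ i

theorem integrable_and_integral_le_of_lintegral_le {α : Type*} [MeasurableSpace α] {μ : Measure α}
    {g : α → ℝ} {B : ℝ} (hg : AEStronglyMeasurable g μ) (hg₀ : ∀ x, 0 ≤ g x) (hB : 0 ≤ B)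
    (hgB : ∫⁻ x, ENNReal.ofReal (g x) ∂μ ≤ ENNReal.ofReal B) :
    Integrable g μ ∧ ∫ x, g x ∂μ ≤ B := by
  have hg₀' : 0 ≤ᵐ[μ] g := ae_of_all _ hg₀
  refine ⟨⟨hg, ?_⟩, ?_⟩
  · rw [hasFiniteIntegral_iff_ofReal hg₀']
    exact hgB.trans_lt ENNReal.ofReal_lt_top
  · rw [integral_eq_lintegral_of_nonneg_ae hg₀' hg, ← ENNReal.toReal_ofReal hB]
    exact ENNReal.toReal_mono ENNReal.ofReal_ne_top hgB

section DualFactor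

variable {f : ℝ → ℝ} {B l₁ l₂ : ℝ} {κ : Measure ℝ}

def dualFactor (f : ℝ → ℝ) (B m l₁ l₂ y : ℝ) : ℝ := 1 - (y - m) * l₁ - (B - f |y|) * l₂

theorem continuous_dualFactor (hf : Continuous fun y => f |y|) (B m l₁ l₂ : ℝ) :
    Continuous (dualFactor f B m l₁ l₂) :=
  (continuous_const.sub ((continuous_id.sub continuous_const).mul continuous_const)).sub
    ((continuous_const.sub hf).mul continuous_const)

theorem integrable_dualFactor [IsFiniteMeasure κ]
    (hmean : Integrable (fun y : ℝ => y) κ) (hf : Integrable (fun y => f |y|) κ) (m l₁ l₂ : ℝ) :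
    Integrable (dualFactor f B m l₁ l₂) κ :=
  ((integrable_const 1).sub ((hmean.sub (integrable_const m)).mul_const l₁)).sub
    (((integrable_const B).sub hf).mul_const l₂)

theorem integral_dualFactor [IsProbabilityMeasure κ]
    (hmean : Integrable (fun y : ℝ => y) κ) (hf : Integrable (fun y => f |y|) κ) :
    ∫ y, dualFactor f B (meanM κ) l₁ l₂ y ∂κ = 1 - (B - ∫ y, f |y| ∂κ) * l₂ := by
  have h₁ : Integrable (fun y : ℝ => (y - meanM κ) * l₁) κ :=
    (hmean.sub (integrable_const _)).mul_const l₁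
  have h₂ : Integrable (fun y : ℝ => (B - f |y|) * l₂) κ :=
    ((integrable_const B).sub hf).mul_const l₂
  have h₀ : Integrable (fun y : ℝ => 1 - (y - meanM κ) * l₁) κ := (integrable_const 1).sub h₁
  unfold dualFactor
  rw [integral_sub h₀ h₂, integral_sub (integrable_const 1) h₁,
    integral_mul_const, integral_mul_const, integral_sub hmean (integrable_const _),
    integral_sub (integrable_const B) hf]
  simp [meanM]

theorem lintegral_ofReal_dualFactor_le_one [IsProbabilityMeasure κ]
    (hmean : Integrable (fun y : ℝ => y) κ)
    (hf : Integrable (fun y => f |y|) κ) (hfB : ∫ y, f |y| ∂κ ≤ B) (hl₂ : 0 ≤ l₂)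
    (hfeas : ∀ y, 0 ≤ dualFactor f B (meanM κ) l₁ l₂ y) :
    ∫⁻ y, ENNReal.ofReal (dualFactor f B (meanM κ) l₁ l₂ y) ∂κ ≤ 1 := by
  rw [← ofReal_integral_eq_lintegral_ofReal (integrable_dualFactor hmean hf _ _ _)
    (ae_of_all _ hfeas), integral_dualFactor hmean hf]
  exact ENNReal.ofReal_le_one.mpr (sub_le_self _ (mul_nonneg (sub_nonneg.mpr hfB) hl₂))

end DualFactor

theorem stmt_15_general (f : ℝ → ℝ) (B : ℝ)
    (hf_cont : ContinuousOn f (Set.Ici 0))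
    (hf_nonneg : ∀ y : ℝ, 0 ≤ y → 0 ≤ f y)
    (hB : 0 < B)
    (κ : Measure ℝ) (hκ : inL f B κ) (hmean : Integrable (fun y : ℝ => y) κ)
    (l₁ l₂ : ℝ) (hl₂ : 0 < l₂)
    (hfeas : ∀ y : ℝ, 0 ≤ 1 - (y - meanM κ) * l₁ - (B - f |y|) * l₂)
    (Ω : Type*) [MeasurableSpace Ω] (P : Measure Ω)
    (n : ℕ) (hn : 0 < n) (X : Fin n → Ω → ℝ)
    (hXmeas : ∀ i, Measurable (X i))
    (hiid : ProbabilityTheory.iIndepFun X P)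
    (hlaw : ∀ i, Measure.map (X i) P = κ)
    (u : ℝ) :
    P {ω : Ω | (u : EReal) ≤ ((n : ℝ)⁻¹ : ℝ) *
        ∑ i : Fin n, elog (1 - (X i ω - meanM κ) * l₁ - (B - f |X i ω|) * l₂)} ≤
      ENNReal.ofReal (Real.exp (-(n * u))) := by
  obtain ⟨hκ_prob, hκ_B⟩ := hκ
  have hf_abs : Continuous fun y : ℝ => f |y| :=
    hf_cont.comp_continuous continuous_abs fun y => abs_nonneg y
  obtain ⟨hf_int, hf_B⟩ := integrable_and_integral_le_of_lintegral_le
    hf_abs.aestronglyMeasurable (fun y => hf_nonneg _ (abs_nonneg y)) hB.le hκ_B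
  set G : ℝ → ℝ≥0∞ := fun y => ENNReal.ofReal (dualFactor f B (meanM κ) l₁ l₂ y)
  have hG : Measurable G := (continuous_dualFactor hf_abs _ _ _ _).measurable.ennreal_ofReal
  have hG₁ : ∫⁻ y, G y ∂κ ≤ 1 :=
    lintegral_ofReal_dualFactor_le_one hmean hf_int hf_B hl₂.le hfeas
  have hGX₁ : ∀ i, ∫⁻ ω, G (X i ω) ∂P ≤ 1 := fun i => by
    rwa [← lintegral_map hG (hXmeas i), hlaw i]
  calc _ ≤ P {ω | ENNReal.ofReal (Real.exp (n * u)) ≤ ∏ i, G (X i ω)} :=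
        measure_mono fun ω hω =>
          ofReal_exp_le_prod_of_le_inv_mul_sum_elog (Nat.cast_pos.mpr hn) hω
    _ ≤ _ := measure_exp_le_le_exp_neg_of_lintegral_le_one
        (Finset.aemeasurable_fun_prod _ fun i _ => (hG.comp (hXmeas i)).aemeasurable)
        (lintegral_prod_le_one_of_iIndepFun (hiid.comp _ fun _ => hG)
          (fun i => hG.comp (hXmeas i)) hGX₁ _) _

/-- For `κ ∈ ℒ` and dual-feasible `(λ₁, λ₂)` with `λ₁, λ₂ > 0`, if
`X₁, …, X_n` are i.i.d. with law `κ`, then for every `u ≥ 0`,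
`P((1/n) ∑ᵢ log(1 − (Xᵢ − m(κ))λ₁ − (B − f(|Xᵢ|))λ₂) ≥ u) ≤ e^{−n u}`. -/
theorem stmt_15 (f : ℝ → ℝ) (B : ℝ)
    (hf_mono : StrictMonoOn f (Set.Ici 0))
    (hf_cont : ContinuousOn f (Set.Ici 0))
    (hf_nonneg : ∀ y : ℝ, 0 ≤ y → 0 ≤ f y)
    (hf_conv : StrictConvexOn ℝ (Set.Ici 0) f)
    (hf_growth : Tendsto (fun y : ℝ => f y / y) atTop atTop)
    (hB : 0 < B) (hf0B : f 0 < B)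
    (κ : Measure ℝ) (hκ : inL f B κ) (hmean : Integrable (fun y : ℝ => y) κ)
    (l₁ l₂ : ℝ) (hl₁ : 0 < l₁) (hl₂ : 0 < l₂)
    (hfeas : ∀ y : ℝ, 0 ≤ 1 - (y - meanM κ) * l₁ - (B - f |y|) * l₂)
    (Ω : Type*) [MeasurableSpace Ω] (P : Measure Ω) [IsProbabilityMeasure P]
    (n : ℕ) (hn : 0 < n) (X : Fin n → Ω → ℝ)
    (hXmeas : ∀ i, Measurable (X i))
    (hiid : ProbabilityTheory.iIndepFun X P)
    (hlaw : ∀ i, Measure.map (X i) P = κ)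
    (u : ℝ) (hu : 0 ≤ u) :
    P {ω : Ω | (u : EReal) ≤ ((n : ℝ)⁻¹ : ℝ) *
        ∑ i : Fin n, elog (1 - (X i ω - meanM κ) * l₁ - (B - f |X i ω|) * l₂)} ≤
      ENNReal.ofReal (Real.exp (-(n * u))) :=
  stmt_15_general f B hf_cont hf_nonneg hB κ hκ hmean l₁ l₂ hl₂ hfeas Ω P n hn X hXmeas hiid hlaw u
end
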